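/- Let Γ be a good pointclass. If Γ contains a Hamel basis, then Γ contains a Vitali set. Explicitly, if B ∈ Γ is a Hamel basis, fix a representation 1 = Σ_{k=1}^n q_k z_k with nonzero rational coefficients and distinct z_k ∈ B; then V = span_ℚ(B ∖ {z_1}) is a Vitali set and V ∈ Γ. -/

import Mathlib

open Set

open Classical in
/-- The characteristic function of a set, viewed as a point of the Cantor space `α → Bool`. -/
noncomputable def chi {α : Type} (s : Set α) : α → Bool :=
  fun a => if a ∈ s then true else false
/-- A *good pointclass*: a collection of subsets of Polish spaces containing all clopen
sets and closed under countable intersections, countable unions, finite products,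
continuous images, and continuous preimages. -/
structure GoodPointclass : Type 1 where
  mem : ∀ (X : Type) [TopologicalSpace X], Set (Set X)
  clopen_mem : ∀ (X : Type) [TopologicalSpace X] [PolishSpace X] (s : Set X),
    IsClopen s → s ∈ mem X
  iInter_mem : ∀ (X : Type) [TopologicalSpace X] [PolishSpace X] (s : ℕ → Set X),
    (∀ n, s n ∈ mem X) → (⋂ n, s n) ∈ mem X
  iUnion_mem : ∀ (X : Type) [TopologicalSpace X] [PolishSpace X] (s : ℕ → Set X),
    (∀ n, s n ∈ mem X) → (⋃ n, s n) ∈ mem X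
  prod_mem : ∀ (X Y : Type) [TopologicalSpace X] [PolishSpace X]
    [TopologicalSpace Y] [PolishSpace Y] (s : Set X) (t : Set Y),
    s ∈ mem X → t ∈ mem Y → s ×ˢ t ∈ mem (X × Y)
  image_mem : ∀ (X Y : Type) [TopologicalSpace X] [PolishSpace X]
    [TopologicalSpace Y] [PolishSpace Y] (f : X → Y) (s : Set X),
    Continuous f → s ∈ mem X → f '' s ∈ mem Y
  preimage_mem : ∀ (X Y : Type) [TopologicalSpace X] [PolishSpace X]
    [TopologicalSpace Y] [PolishSpace Y] (f : X → Y) (t : Set Y),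
    Continuous f → t ∈ mem Y → f ⁻¹' t ∈ mem X
/-- A Vitali set: `V ⊆ ℝ` such that every real differs from a unique element
of `V` by a rational. -/
def IsVitali (V : Set ℝ) : Prop :=
  ∀ x : ℝ, ∃! v, v ∈ V ∧ ∃ q : ℚ, x - v = (q : ℝ)
/-- A Hamel basis: a basis of `ℝ` as a vector space over `ℚ`. -/
def IsHamelBasis (B : Set ℝ) : Prop :=
  LinearIndependent ℚ ((↑) : B → ℝ) ∧ Submodule.span ℚ B = ⊤

/-!
The coordinate functional `f` of the Hamel basis at `z 0` has kernel `span_ℚ (B \ {z 0})` and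
`f 1 = q 0 ≠ 0`, so this kernel is a complement of `ℚ ∙ 1`, which is exactly a Vitali set.
It lies in `Γ` because `span_ℚ S` is a countable union, over rational coefficient vectors `c`,
of the continuous images of `Sᵐ` under `v ↦ ∑ j, c j • v j`.
-/

theorem Submodule.span_rat_eq_iUnion_image_univ_pi {X : Type*} [AddCommGroup X] [Module ℚ X]
    (s : Set X) : (Submodule.span ℚ s : Set X) =
      ⋃ c : Σ m, Fin m → ℚ, (fun v : Fin c.1 → X => ∑ j, c.2 j • v j) '' univ.pi fun _ => s := by
  ext x
  simp only [SetLike.mem_coe, Submodule.mem_span_set', mem_iUnion, mem_image, mem_univ_pi,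
    Sigma.exists]
  constructor
  · rintro ⟨m, c, v, rfl⟩
    exact ⟨m, c, fun j => v j, fun j => (v j).2, rfl⟩
  · rintro ⟨m, c, v, hv, rfl⟩
    exact ⟨m, c, fun j => ⟨v j, hv j⟩, rfl⟩

namespace GoodPointclass

variable (Γ : GoodPointclass) {X : Type} [TopologicalSpace X] [PolishSpace X]

theorem iInter_countable_mem {ι : Type} [Countable ι] {s : ι → Set X}
    (hs : ∀ i, s i ∈ Γ.mem X) : ⋂ i, s i ∈ Γ.mem X := by
  cases isEmpty_or_nonempty ι
  · simpa using Γ.clopen_mem X univ isClopen_univ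
  · obtain ⟨e, he⟩ := exists_surjective_nat ι
    rw [← he.iInter_comp]
    exact Γ.iInter_mem X _ fun n => hs (e n)

theorem iUnion_countable_mem {ι : Type} [Countable ι] {s : ι → Set X}
    (hs : ∀ i, s i ∈ Γ.mem X) : ⋃ i, s i ∈ Γ.mem X := by
  cases isEmpty_or_nonempty ι
  · simpa using Γ.clopen_mem X ∅ isClopen_empty
  · obtain ⟨e, he⟩ := exists_surjective_nat ι
    rw [← he.iUnion_comp]
    exact Γ.iUnion_mem X _ fun n => hs (e n)

theorem inter_mem {s t : Set X} (hs : s ∈ Γ.mem X) (ht : t ∈ Γ.mem X) : s ∩ t ∈ Γ.mem X := by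
  rw [inter_eq_iInter]
  exact Γ.iInter_countable_mem (Bool.forall_bool.2 ⟨ht, hs⟩)

theorem isOpen_mem {U : Set X} (hU : IsOpen U) : U ∈ Γ.mem X := by
  have : PolishSpace U := hU.polishSpace
  simpa using Γ.image_mem U X Subtype.val univ continuous_subtype_val
    (Γ.clopen_mem U univ isClopen_univ)

theorem diff_mem {s t : Set X} (hs : s ∈ Γ.mem X) (ht : IsClosed t) : s \ t ∈ Γ.mem X :=
  Γ.inter_mem hs (Γ.isOpen_mem ht.isOpen_compl)

theorem univ_pi_mem {ι : Type} [Countable ι] {s : ι → Set X} (hs : ∀ i, s i ∈ Γ.mem X) :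
    univ.pi s ∈ Γ.mem (ι → X) := by
  rw [univ_pi_eq_iInter]
  exact Γ.iInter_countable_mem fun i => Γ.preimage_mem _ _ _ _ (continuous_apply i) (hs i)

theorem span_mem [AddCommGroup X] [Module ℚ X] [ContinuousAdd X] [ContinuousConstSMul ℚ X]
    {s : Set X} (hs : s ∈ Γ.mem X) : (Submodule.span ℚ s : Set X) ∈ Γ.mem X := by
  rw [Submodule.span_rat_eq_iUnion_image_univ_pi]
  exact Γ.iUnion_countable_mem fun c => Γ.image_mem _ _ _ _
    (continuous_finsetSum _ fun j _ => (continuous_apply j).const_smul (c.2 j))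
    (Γ.univ_pi_mem fun _ => hs)

end GoodPointclass

theorem Module.Basis.span_image_compl_singleton {ι R M : Type*} [Semiring R] [AddCommGroup M]
    [Module R M] (b : Module.Basis ι R M) (i : ι) :
    Submodule.span R (b '' {i}ᶜ) = LinearMap.ker (b.coord i) := by
  ext m
  simp [b.mem_span_image, subset_compl_singleton_iff]

theorem Module.Basis.coord_sum_smul_of_injective {ι κ R M : Type*} [Fintype κ] [Semiring R]
    [AddCommGroup M] [Module R M] (b : Module.Basis ι R M) {g : κ → ι} (hg : Function.Injective g)
    (c : κ → R) (j : κ) : b.coord (g j) (∑ k, c k • b (g k)) = c j := by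
  classical
  simp [Finsupp.single_apply_left hg, Finsupp.single_apply]

theorem LinearMap.isCompl_ker_span_singleton {K V : Type*} [Field K] [AddCommGroup V]
    [Module K V] (f : V →ₗ[K] K) {x : V} (hx : f x ≠ 0) : IsCompl (ker f) (K ∙ x) :=
  ⟨Submodule.disjoint_span_singleton_of_notMem hx,
    codisjoint_iff.2 (sup_comm (ker f) _ ▸ f.span_singleton_sup_ker_eq_top hx)⟩

theorem isVitali_of_isCompl {V : Submodule ℚ ℝ} (hV : IsCompl V (ℚ ∙ (1 : ℝ))) :
    IsVitali V := by
  intro x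
  obtain ⟨v, hv, _, hr, hx⟩ := Submodule.mem_sup.1 (hV.sup_eq_top ▸ Submodule.mem_top (x := x))
  obtain ⟨r, rfl⟩ := Submodule.mem_span_singleton.1 hr
  refine ⟨v, ⟨hv, r, by rw [← hx, Rat.smul_one_eq_cast]; ring⟩, ?_⟩
  rintro v' ⟨hv', r', hr'⟩
  have hdiff : v' - v = (r - r' : ℚ) • (1 : ℝ) := by
    rw [Rat.smul_one_eq_cast]; push_cast; rw [← hr', ← hx, Rat.smul_one_eq_cast]; ring
  have := Submodule.disjoint_def.1 hV.disjoint (v' - v) (V.sub_mem hv' hv)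
    (hdiff ▸ Submodule.smul_mem _ _ (Submodule.mem_span_singleton_self 1))
  exact sub_eq_zero.1 this

theorem hamel_basis_gives_vitali_set (Γ : GoodPointclass)
    (B : Set ℝ) (hB : IsHamelBasis B) (hBΓ : B ∈ Γ.mem ℝ)
    (n : ℕ) (z : Fin (n + 1) → ℝ) (hzinj : Function.Injective z)
    (hzB : ∀ k, z k ∈ B) (q : Fin (n + 1) → ℚ) (hq : ∀ k, q k ≠ 0)
    (hrep : ∑ k, (q k : ℝ) * z k = 1) :
    IsVitali (↑(Submodule.span ℚ (B \ {z 0})) : Set ℝ) ∧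
      (↑(Submodule.span ℚ (B \ {z 0})) : Set ℝ) ∈ Γ.mem ℝ := by
  let b : Module.Basis B ℚ ℝ := .mk hB.1 (by rw [Subtype.range_coe, hB.2])
  let g : Fin (n + 1) → B := fun k => ⟨z k, hzB k⟩
  have hg : Function.Injective g := fun i j h => hzinj (congrArg Subtype.val h)
  have hspan : Submodule.span ℚ (B \ {z 0}) = LinearMap.ker (b.coord (g 0)) := by
    rw [← b.span_image_compl_singleton, Module.Basis.coe_mk]
    congr 1
    ext x
    simp [g]
  have hcoord : b.coord (g 0) 1 = q 0 := by
    simpa [← hrep, b, g, Rat.smul_def] using b.coord_sum_smul_of_injective hg q 0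
  refine ⟨?_, Γ.span_mem (Γ.diff_mem hBΓ isClosed_singleton)⟩
  rw [hspan]
  exact isVitali_of_isCompl ((b.coord (g 0)).isCompl_ker_span_singleton (hcoord ▸ hq 0))
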